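/- arXiv:2210.15528 — 2 statements merged into one kernel-verified Lean document; each statement's English description precedes it below -/
import Mathlib

section
/- Assume the kernel κ : ℝ^d × ℝ^d → ℝ is Lipschitz continuous with constant L_κ (with respect to the Euclidean norm on ℝ^d × ℝ^d), and that 𝒦 + σ_n² I_N is invertible. Then the GP posterior mean μ is Lipschitz continuous on ℝ^d with Lipschitz constant L_κ · √N · ‖(𝒦 + σ_n² I_N)⁻¹ y‖, i.e. |μ(x) − μ(x′)| ≤ L_κ √N ‖(𝒦 + σ_n² I_N)⁻¹ y‖ · ‖x − x′‖ for all x, x′ ∈ ℝ^d. -/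
/-!
The posterior mean is `x ↦ 𝛋(x) ⬝ w` for the fixed weight vector `w = (𝒦 + σₙ² I)⁻¹ y`,
so `μ(x) - μ(x') = (𝛋(x) - 𝛋(x')) ⬝ w ≤ ‖𝛋(x) - 𝛋(x')‖ ‖w‖` by Cauchy–Schwarz. Holding the
second argument of `κ` fixed, each of the `N` coordinates `κ(x, xₖ) - κ(x', xₖ)` is at most
`L_κ ‖x - x'‖`, whence `‖𝛋(x) - 𝛋(x')‖ ≤ √N L_κ ‖x - x'‖`.
-/
open Matrix

/-- Euclidean norm of a vector in `Fin N → ℝ`. -/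
noncomputable def eNorm {N : ℕ} (v : Fin N → ℝ) : ℝ :=
  ‖(WithLp.equiv 2 (Fin N → ℝ)).symm v‖

/-- Gram matrix of a kernel on the training inputs. -/
noncomputable def gram {d N : ℕ}
    (κ : EuclideanSpace ℝ (Fin d) → EuclideanSpace ℝ (Fin d) → ℝ)
    (xs : Fin N → EuclideanSpace ℝ (Fin d)) : Matrix (Fin N) (Fin N) ℝ :=
  Matrix.of fun k h => κ (xs k) (xs h)

/-- Kernel vector at a test point. -/
noncomputable def kvec {d N : ℕ}
    (κ : EuclideanSpace ℝ (Fin d) → EuclideanSpace ℝ (Fin d) → ℝ)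
    (xs : Fin N → EuclideanSpace ℝ (Fin d)) (x : EuclideanSpace ℝ (Fin d)) :
    Fin N → ℝ :=
  fun k => κ x (xs k)

/-- GP posterior mean. -/
noncomputable def postMean {d N : ℕ}
    (κ : EuclideanSpace ℝ (Fin d) → EuclideanSpace ℝ (Fin d) → ℝ)
    (xs : Fin N → EuclideanSpace ℝ (Fin d)) (σn2 : ℝ) (y : Fin N → ℝ)
    (x : EuclideanSpace ℝ (Fin d)) : ℝ :=
  kvec κ xs x ⬝ᵥ ((gram κ xs + σn2 • (1 : Matrix (Fin N) (Fin N) ℝ))⁻¹ *ᵥ y)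

theorem abs_dotProduct_le_eNorm_mul {N : ℕ} (v w : Fin N → ℝ) :
    |v ⬝ᵥ w| ≤ eNorm v * eNorm w := by
  have := abs_real_inner_le_norm ((WithLp.equiv 2 (Fin N → ℝ)).symm v)
    ((WithLp.equiv 2 (Fin N → ℝ)).symm w)
  simpa [eNorm, PiLp.inner_apply, dotProduct, mul_comm] using this

theorem eNorm_le_sqrt_mul_of_abs_le {N : ℕ} {v : Fin N → ℝ} {t : ℝ} (ht : 0 ≤ t)
    (hv : ∀ k, |v k| ≤ t) : eNorm v ≤ Real.sqrt N * t := by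
  have hsq : ∑ k, v k ^ 2 ≤ N * t ^ 2 := by
    simpa using Finset.sum_le_card_nsmul Finset.univ (fun k => v k ^ 2) (t ^ 2)
      fun k _ => sq_le_sq' (abs_le.mp (hv k)).1 (abs_le.mp (hv k)).2
  calc eNorm v = Real.sqrt (∑ k, v k ^ 2) := by simp [eNorm, EuclideanSpace.norm_eq]
    _ ≤ Real.sqrt (N * t ^ 2) := Real.sqrt_le_sqrt hsq
    _ = Real.sqrt N * t := by rw [Real.sqrt_mul (Nat.cast_nonneg N), Real.sqrt_sq ht]

theorem abs_sub_le_of_lipschitz_prod {E F : Type*} [SeminormedAddCommGroup E]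
    [SeminormedAddCommGroup F] {κ : E → F → ℝ} {L : ℝ}
    (hκ : ∀ x x' x₁ x₁',
      |κ x x' - κ x₁ x₁'| ≤ L * Real.sqrt (‖x - x₁‖ ^ 2 + ‖x' - x₁'‖ ^ 2))
    (x x₁ : E) (z : F) : |κ x z - κ x₁ z| ≤ L * ‖x - x₁‖ := by
  simpa [Real.sqrt_sq (norm_nonneg _)] using hκ x z x₁ z

theorem postMean_sub_postMean {d N : ℕ}
    (κ : EuclideanSpace ℝ (Fin d) → EuclideanSpace ℝ (Fin d) → ℝ)
    (xs : Fin N → EuclideanSpace ℝ (Fin d)) (σn2 : ℝ) (y : Fin N → ℝ)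
    (x x' : EuclideanSpace ℝ (Fin d)) :
    postMean κ xs σn2 y x - postMean κ xs σn2 y x' =
      (kvec κ xs x - kvec κ xs x') ⬝ᵥ
        ((gram κ xs + σn2 • (1 : Matrix (Fin N) (Fin N) ℝ))⁻¹ *ᵥ y) :=
  (sub_dotProduct _ _ _).symm

theorem posterior_mean_lipschitz_general {d N : ℕ}
    (κ : EuclideanSpace ℝ (Fin d) → EuclideanSpace ℝ (Fin d) → ℝ)
    (xs : Fin N → EuclideanSpace ℝ (Fin d)) (y : Fin N → ℝ)
    (σn2 : ℝ) (Lκ : ℝ)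
    (hLip : ∀ x x' x₁ x₁' : EuclideanSpace ℝ (Fin d),
      |κ x x' - κ x₁ x₁'| ≤ Lκ * Real.sqrt (‖x - x₁‖ ^ 2 + ‖x' - x₁'‖ ^ 2)) :
    ∀ x x' : EuclideanSpace ℝ (Fin d),
      |postMean κ xs σn2 y x - postMean κ xs σn2 y x'| ≤
        Lκ * Real.sqrt N *
          eNorm ((gram κ xs + σn2 • (1 : Matrix (Fin N) (Fin N) ℝ))⁻¹ *ᵥ y) *
          ‖x - x'‖ := by
  intro x x'
  set w := (gram κ xs + σn2 • (1 : Matrix (Fin N) (Fin N) ℝ))⁻¹ *ᵥ y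
  have hkvec : ∀ k, |(kvec κ xs x - kvec κ xs x') k| ≤ Lκ * ‖x - x'‖ :=
    fun k => abs_sub_le_of_lipschitz_prod hLip x x' (xs k)
  have hbound_nonneg : 0 ≤ Lκ * ‖x - x'‖ :=
    (abs_nonneg _).trans (abs_sub_le_of_lipschitz_prod hLip x x' x)
  calc |postMean κ xs σn2 y x - postMean κ xs σn2 y x'|
      = |(kvec κ xs x - kvec κ xs x') ⬝ᵥ w| := by rw [postMean_sub_postMean]
    _ ≤ eNorm (kvec κ xs x - kvec κ xs x') * eNorm w := abs_dotProduct_le_eNorm_mul _ _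
    _ ≤ Real.sqrt N * (Lκ * ‖x - x'‖) * eNorm w :=
        mul_le_mul_of_nonneg_right (eNorm_le_sqrt_mul_of_abs_le hbound_nonneg hkvec)
          (norm_nonneg _)
    _ = Lκ * Real.sqrt N * eNorm w * ‖x - x'‖ := by ring

/-- If the kernel is `Lκ`-Lipschitz with respect to the Euclidean norm on
`ℝ^d × ℝ^d` and the regularized Gram matrix is invertible, then the GP posterior mean is
Lipschitz with constant `Lκ √N ‖(𝒦 + σₙ² I)⁻¹ y‖`. -/
theorem posterior_mean_lipschitz {d N : ℕ}
    (κ : EuclideanSpace ℝ (Fin d) → EuclideanSpace ℝ (Fin d) → ℝ)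
    (xs : Fin N → EuclideanSpace ℝ (Fin d)) (y : Fin N → ℝ)
    (σn2 : ℝ) (Lκ : ℝ)
    (hLip : ∀ x x' x₁ x₁' : EuclideanSpace ℝ (Fin d),
      |κ x x' - κ x₁ x₁'| ≤ Lκ * Real.sqrt (‖x - x₁‖ ^ 2 + ‖x' - x₁'‖ ^ 2))
    (hInv : IsUnit (gram κ xs + σn2 • (1 : Matrix (Fin N) (Fin N) ℝ))) :
    ∀ x x' : EuclideanSpace ℝ (Fin d),
      |postMean κ xs σn2 y x - postMean κ xs σn2 y x'| ≤
        Lκ * Real.sqrt N *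
          eNorm ((gram κ xs + σn2 • (1 : Matrix (Fin N) (Fin N) ℝ))⁻¹ *ᵥ y) *
          ‖x - x'‖ :=
  posterior_mean_lipschitz_general κ xs y σn2 Lκ hLip
end

section
/- Let 𝒳 ⊆ ℝ^d contain the training inputs x^1, …, x^N. Assume the kernel κ : ℝ^d × ℝ^d → ℝ is Lipschitz continuous with constant L_κ (with respect to the Euclidean norm on ℝ^d × ℝ^d), that |κ(x, x′)| ≤ κ_max for all x, x′ ∈ 𝒳, and that 𝒦 + σ_n² I_N is invertible. Then for all x, x′ ∈ 𝒳 the GP posterior variance satisfies |σ²(x) − σ²(x′)| ≤ 2 L_κ (1 + N ‖(𝒦 + σ_n² I_N)⁻¹‖ κ_max) · ‖x − x′‖. -/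
/-!
Write `u = 𝛋(x)`, `v = 𝛋(x′)` and `B = (𝒦 + σ_n² I)⁻¹`. Then
`σ²(x) − σ²(x′) = (κ(x,x) − κ(x′,x′)) − ((u − v)ᵀ B u + vᵀ B (u − v))`.
The diagonal term is at most `2 L_κ ‖x − x′‖` by going through `κ(x′,x)`; for the other two,
Cauchy–Schwarz and `‖u‖, ‖v‖ ≤ √N κ_max`, `‖u − v‖ ≤ √N L_κ ‖x − x′‖` give
`2 N ‖B‖ κ_max L_κ ‖x − x′‖`.
-/

open Matrix

/-- Operator norm of a matrix induced by the Euclidean norm. -/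
noncomputable def matOpNorm {N : ℕ} (M : Matrix (Fin N) (Fin N) ℝ) : ℝ :=
  ‖Matrix.toEuclideanCLM (𝕜 := ℝ) M‖

/-- GP posterior variance. -/
noncomputable def postVar {d N : ℕ}
    (κ : EuclideanSpace ℝ (Fin d) → EuclideanSpace ℝ (Fin d) → ℝ)
    (xs : Fin N → EuclideanSpace ℝ (Fin d)) (σn2 : ℝ)
    (x : EuclideanSpace ℝ (Fin d)) : ℝ :=
  κ x x -
    kvec κ xs x ⬝ᵥ ((gram κ xs + σn2 • (1 : Matrix (Fin N) (Fin N) ℝ))⁻¹ *ᵥ kvec κ xs x)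

open scoped RealInnerProductSpace

theorem EuclideanSpace.norm_le_sqrt_card_mul {𝕜 ι : Type*} [RCLike 𝕜] [Fintype ι]
    {x : EuclideanSpace 𝕜 ι} {c : ℝ} (h : ∀ i, ‖x i‖ ≤ c) :
    ‖x‖ ≤ √(Fintype.card ι) * c := by
  rcases isEmpty_or_nonempty ι with _ | ⟨⟨i⟩⟩
  · simp [Subsingleton.elim x 0]
  have hc : 0 ≤ c := (norm_nonneg _).trans (h i)
  calc ‖x‖ = √(∑ i, ‖x i‖ ^ 2) := EuclideanSpace.norm_eq x
    _ ≤ √(∑ _ : ι, c ^ 2) := by gcongr with i; exact h i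
    _ = √(Fintype.card ι) * c := by
      simp only [Finset.sum_const, Finset.card_univ, nsmul_eq_mul]
      rw [Real.sqrt_mul (Nat.cast_nonneg _), Real.sqrt_sq hc]

theorem abs_inner_map_self_sub_inner_map_self_le {E : Type*} [NormedAddCommGroup E]
    [InnerProductSpace ℝ E] (A : E →L[ℝ] E) (u v : E) :
    |⟪u, A u⟫ - ⟪v, A v⟫| ≤ ‖A‖ * (‖u‖ + ‖v‖) * ‖u - v‖ := by
  have hsplit : ⟪u, A u⟫ - ⟪v, A v⟫ = ⟪u - v, A u⟫ + ⟪v, A (u - v)⟫ := by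
    simp only [inner_sub_left, inner_sub_right, map_sub]
    ring
  calc |⟪u, A u⟫ - ⟪v, A v⟫| ≤ |⟪u - v, A u⟫| + |⟪v, A (u - v)⟫| := by
        rw [hsplit]; exact abs_add_le _ _
    _ ≤ ‖u - v‖ * (‖A‖ * ‖u‖) + ‖v‖ * (‖A‖ * ‖u - v‖) := by
        gcongr <;>
          exact (abs_real_inner_le_norm _ _).trans (by gcongr; exact A.le_opNorm _)
    _ = ‖A‖ * (‖u‖ + ‖v‖) * ‖u - v‖ := by ring

theorem Matrix.abs_dotProduct_mulVec_self_sub_le {ι : Type*} [Fintype ι] [DecidableEq ι]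
    (M : Matrix ι ι ℝ) (u v : EuclideanSpace ℝ ι) :
    |u ⬝ᵥ M *ᵥ u - v ⬝ᵥ M *ᵥ v| ≤ ‖toEuclideanCLM (𝕜 := ℝ) M‖ * (‖u‖ + ‖v‖) * ‖u - v‖ := by
  simpa only [inner_toEuclideanCLM] using
    abs_inner_map_self_sub_inner_map_self_le (toEuclideanCLM (𝕜 := ℝ) M) u v

section LipschitzKernel

variable {E : Type*} [SeminormedAddCommGroup E] {κ : E → E → ℝ} {Lκ : ℝ}

theorem abs_sub_left_le_of_lipschitz
    (hLip : ∀ x x' x₁ x₁' : E, |κ x x' - κ x₁ x₁'| ≤ Lκ * √(‖x - x₁‖ ^ 2 + ‖x' - x₁'‖ ^ 2))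
    (x x' z : E) : |κ x z - κ x' z| ≤ Lκ * ‖x - x'‖ := by
  simpa [Real.sqrt_sq (norm_nonneg _)] using hLip x z x' z

theorem abs_sub_right_le_of_lipschitz
    (hLip : ∀ x x' x₁ x₁' : E, |κ x x' - κ x₁ x₁'| ≤ Lκ * √(‖x - x₁‖ ^ 2 + ‖x' - x₁'‖ ^ 2))
    (z x x' : E) : |κ z x - κ z x'| ≤ Lκ * ‖x - x'‖ := by
  simpa [Real.sqrt_sq (norm_nonneg _)] using hLip z x z x'

theorem abs_sub_diag_le_of_lipschitz
    (hLip : ∀ x x' x₁ x₁' : E, |κ x x' - κ x₁ x₁'| ≤ Lκ * √(‖x - x₁‖ ^ 2 + ‖x' - x₁'‖ ^ 2))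
    (x x' : E) : |κ x x - κ x' x'| ≤ 2 * Lκ * ‖x - x'‖ :=
  calc |κ x x - κ x' x'| ≤ |κ x x - κ x' x| + |κ x' x - κ x' x'| := abs_sub_le _ _ _
    _ ≤ Lκ * ‖x - x'‖ + Lκ * ‖x - x'‖ :=
      add_le_add (abs_sub_left_le_of_lipschitz hLip x x' x)
        (abs_sub_right_le_of_lipschitz hLip x' x x')
    _ = 2 * Lκ * ‖x - x'‖ := by ring

end LipschitzKernel

section KernelVector

variable {d N : ℕ} {κ : EuclideanSpace ℝ (Fin d) → EuclideanSpace ℝ (Fin d) → ℝ}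
  {xs : Fin N → EuclideanSpace ℝ (Fin d)}

theorem norm_kvec_le {𝒳 : Set (EuclideanSpace ℝ (Fin d))} {κmax : ℝ} (hxs : ∀ i, xs i ∈ 𝒳)
    (hbound : ∀ x ∈ 𝒳, ∀ x' ∈ 𝒳, |κ x x'| ≤ κmax) {x : EuclideanSpace ℝ (Fin d)} (hx : x ∈ 𝒳) :
    ‖WithLp.toLp 2 (kvec κ xs x)‖ ≤ √N * κmax := by
  simpa using EuclideanSpace.norm_le_sqrt_card_mul fun i => hbound x hx (xs i) (hxs i)

theorem norm_kvec_sub_le {Lκ : ℝ}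
    (hLip : ∀ x x' x₁ x₁' : EuclideanSpace ℝ (Fin d),
      |κ x x' - κ x₁ x₁'| ≤ Lκ * √(‖x - x₁‖ ^ 2 + ‖x' - x₁'‖ ^ 2))
    (x x' : EuclideanSpace ℝ (Fin d)) :
    ‖WithLp.toLp 2 (kvec κ xs x) - WithLp.toLp 2 (kvec κ xs x')‖ ≤ √N * (Lκ * ‖x - x'‖) := by
  simpa using EuclideanSpace.norm_le_sqrt_card_mul
    (x := WithLp.toLp 2 (kvec κ xs x - kvec κ xs x'))
    fun i => abs_sub_left_le_of_lipschitz hLip x x' (xs i)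

end KernelVector

theorem posterior_variance_lipschitz_general {d N : ℕ}
    (𝒳 : Set (EuclideanSpace ℝ (Fin d)))
    (κ : EuclideanSpace ℝ (Fin d) → EuclideanSpace ℝ (Fin d) → ℝ)
    (xs : Fin N → EuclideanSpace ℝ (Fin d))
    (hxs : ∀ i, xs i ∈ 𝒳)
    (σn2 : ℝ) (Lκ κmax : ℝ)
    (hLip : ∀ x x' x₁ x₁' : EuclideanSpace ℝ (Fin d),
      |κ x x' - κ x₁ x₁'| ≤ Lκ * Real.sqrt (‖x - x₁‖ ^ 2 + ‖x' - x₁'‖ ^ 2))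
    (hbound : ∀ x ∈ 𝒳, ∀ x' ∈ 𝒳, |κ x x'| ≤ κmax) :
    ∀ x ∈ 𝒳, ∀ x' ∈ 𝒳,
      |postVar κ xs σn2 x - postVar κ xs σn2 x'| ≤
        2 * Lκ *
          (1 + N * matOpNorm (gram κ xs + σn2 • (1 : Matrix (Fin N) (Fin N) ℝ))⁻¹ * κmax) *
          ‖x - x'‖ := by
  intro x hx x' hx'
  set B := (gram κ xs + σn2 • (1 : Matrix (Fin N) (Fin N) ℝ))⁻¹
  set u := WithLp.toLp 2 (kvec κ xs x)
  set v := WithLp.toLp 2 (kvec κ xs x')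
  have hu : ‖u‖ ≤ √N * κmax := norm_kvec_le hxs hbound hx
  have hκN : 0 ≤ √N * κmax := (norm_nonneg u).trans hu
  have hv : ‖v‖ ≤ √N * κmax := norm_kvec_le hxs hbound hx'
  have huv : ‖u - v‖ ≤ √N * (Lκ * ‖x - x'‖) := norm_kvec_sub_le hLip x x'
  have hN : √N * √N = (N : ℝ) := Real.mul_self_sqrt (Nat.cast_nonneg N)
  calc |postVar κ xs σn2 x - postVar κ xs σn2 x'|
      = |(κ x x - κ x' x') - (u ⬝ᵥ B *ᵥ u - v ⬝ᵥ B *ᵥ v)| := by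
        congr 1
        simp only [postVar, u, v, B]
        ring
    _ ≤ |κ x x - κ x' x'| + |u ⬝ᵥ B *ᵥ u - v ⬝ᵥ B *ᵥ v| := abs_sub _ _
    _ ≤ 2 * Lκ * ‖x - x'‖ + matOpNorm B * (√N * κmax + √N * κmax) * (√N * (Lκ * ‖x - x'‖)) :=
        add_le_add (abs_sub_diag_le_of_lipschitz hLip x x')
          ((B.abs_dotProduct_mulVec_self_sub_le u v).trans <|
            mul_le_mul (mul_le_mul_of_nonneg_left (add_le_add hu hv) (norm_nonneg _)) huv
              (norm_nonneg _) (mul_nonneg (norm_nonneg _) (add_nonneg hκN hκN)))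
    _ = 2 * Lκ * (1 + N * matOpNorm B * κmax) * ‖x - x'‖ := by
        linear_combination (2 * matOpNorm B * κmax * Lκ * ‖x - x'‖) * hN

/-- Lipschitz bound for the GP posterior variance on a set `𝒳` containing the
training inputs, for a Lipschitz kernel bounded by `κmax` on `𝒳`. -/
theorem posterior_variance_lipschitz {d N : ℕ}
    (𝒳 : Set (EuclideanSpace ℝ (Fin d)))
    (κ : EuclideanSpace ℝ (Fin d) → EuclideanSpace ℝ (Fin d) → ℝ)
    (xs : Fin N → EuclideanSpace ℝ (Fin d))
    (hxs : ∀ i, xs i ∈ 𝒳)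
    (σn2 : ℝ) (Lκ κmax : ℝ)
    (hLip : ∀ x x' x₁ x₁' : EuclideanSpace ℝ (Fin d),
      |κ x x' - κ x₁ x₁'| ≤ Lκ * Real.sqrt (‖x - x₁‖ ^ 2 + ‖x' - x₁'‖ ^ 2))
    (hbound : ∀ x ∈ 𝒳, ∀ x' ∈ 𝒳, |κ x x'| ≤ κmax)
    (hInv : IsUnit (gram κ xs + σn2 • (1 : Matrix (Fin N) (Fin N) ℝ))) :
    ∀ x ∈ 𝒳, ∀ x' ∈ 𝒳,
      |postVar κ xs σn2 x - postVar κ xs σn2 x'| ≤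
        2 * Lκ *
          (1 + N * matOpNorm (gram κ xs + σn2 • (1 : Matrix (Fin N) (Fin N) ℝ))⁻¹ * κmax) *
          ‖x - x'‖ :=
  posterior_variance_lipschitz_general 𝒳 κ xs hxs σn2 Lκ κmax hLip hbound
end
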